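/- Let K be a smooth solution of the oriented associativity equations (AE) on ℝⁿ, let λ, μ ∈ ℝ with λ + μ ≠ 0, let ψ_λ be a smooth solution of the vector spectral problem ∂_β ψ_λ^α = λ ∂_β∂_γ K^α ψ_λ^γ, and let χ_μ be a smooth solution of the scalar spectral problem ∂_α∂_γ χ_μ = μ ∂_α∂_γ K^ν ∂_ν χ_μ. Define Ξ = (λμ/(λ+μ)) ψ_λ^ν ∂_ν χ_μ. Then the pair (G, Ξ) with G^α = ψ_λ^α satisfies the linearization of the scalar spectral problem with parameter μ: ∂_α∂_γ Ξ = μ ∂_α∂_γ G^ν ∂_ν χ_μ + μ ∂_α∂_γ K^ν ∂_ν Ξ for all α,γ. -/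

import Mathlib

/-- Partial derivative of `f` in the `i`-th coordinate direction on `ℝⁿ`. -/
noncomputable def pd {n : ℕ} (i : Fin n) (f : (Fin n → ℝ) → ℝ) : (Fin n → ℝ) → ℝ :=
  fun x => fderiv ℝ f x (Pi.single i 1)

lemma contDiff_pd {n : ℕ} {f : (Fin n → ℝ) → ℝ} (hf : ContDiff ℝ (⊤ : ℕ∞) f) (i : Fin n) :
    ContDiff ℝ (⊤ : ℕ∞) (pd i f) :=
  (hf.fderiv_right (m := (⊤ : ℕ∞)) (by simp)).clm_apply contDiff_const

lemma pd_mul {n : ℕ} {f g : (Fin n → ℝ) → ℝ} {x : Fin n → ℝ} (hf : DifferentiableAt ℝ f x)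
    (hg : DifferentiableAt ℝ g x) (i : Fin n) :
    pd i (fun y => f y * g y) x = pd i f x * g x + f x * pd i g x := by
  simp only [pd, fderiv_fun_mul hf hg, ContinuousLinearMap.add_apply, ContinuousLinearMap.smul_apply,
    smul_eq_mul]
  ring

lemma pd_sum {n : ℕ} {ι : Type*} (s : Finset ι) {f : ι → (Fin n → ℝ) → ℝ} {x : Fin n → ℝ}
    (hf : ∀ j ∈ s, DifferentiableAt ℝ (f j) x) (i : Fin n) :
    pd i (fun y => ∑ j ∈ s, f j y) x = ∑ j ∈ s, pd i (f j) x := by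
  simp only [pd, fderiv_fun_sum hf, ContinuousLinearMap.sum_apply]

lemma pd_const_mul {n : ℕ} {f : (Fin n → ℝ) → ℝ} {x : Fin n → ℝ} (hf : DifferentiableAt ℝ f x)
    (c : ℝ) (i : Fin n) :
    pd i (fun y => c * f y) x = c * pd i f x := by
  simp only [pd, fderiv_const_mul hf c, ContinuousLinearMap.smul_apply, smul_eq_mul]

lemma pd_csum {n : ℕ} (c : ℝ) (f g : Fin n → (Fin n → ℝ) → ℝ) {x : Fin n → ℝ}
    (hf : ∀ j, DifferentiableAt ℝ (f j) x) (hg : ∀ j, DifferentiableAt ℝ (g j) x) (i : Fin n) :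
    pd i (fun y => c * ∑ j, f j y * g j y) x
      = c * ∑ j, (pd i (f j) x * g j x + f j x * pd i (g j) x) := by
  have h1 : pd i (fun y => c * ∑ j, f j y * g j y) x
      = c * pd i (fun y => ∑ j, f j y * g j y) x :=
    pd_const_mul (DifferentiableAt.fun_sum fun j _ => (hf j).fun_mul (hg j)) c i
  rw [h1, pd_sum _ (fun j _ => (hf j).fun_mul (hg j)) i]
  congr 1
  exact Finset.sum_congr rfl fun j _ => pd_mul (hf j) (hg j) i

lemma pd_csum2 {n : ℕ} (c : ℝ) (f : Fin n → Fin n → (Fin n → ℝ) → ℝ)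
    (g h : Fin n → (Fin n → ℝ) → ℝ) {x : Fin n → ℝ}
    (hf : ∀ ν κ, DifferentiableAt ℝ (f ν κ) x) (hg : ∀ j, DifferentiableAt ℝ (g j) x)
    (hh : ∀ j, DifferentiableAt ℝ (h j) x) (i : Fin n) :
    pd i (fun y => c * ∑ ν, ∑ κ, f ν κ y * (g κ y * h ν y)) x
      = c * ∑ ν, ∑ κ, (pd i (f ν κ) x * (g κ x * h ν x)
          + f ν κ x * (pd i (g κ) x * h ν x + g κ x * pd i (h ν) x)) := by
  have dgh : ∀ ν κ, DifferentiableAt ℝ (fun y => g κ y * h ν y) x := fun ν κ => (hg κ).mul (hh ν)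
  have dt : ∀ ν κ, DifferentiableAt ℝ (fun y => f ν κ y * (g κ y * h ν y)) x :=
    fun ν κ => (hf ν κ).mul (dgh ν κ)
  have ds : ∀ ν, DifferentiableAt ℝ (fun y => ∑ κ, f ν κ y * (g κ y * h ν y)) x :=
    fun ν => DifferentiableAt.fun_sum fun κ _ => dt ν κ
  have h1 : pd i (fun y => c * ∑ ν, ∑ κ, f ν κ y * (g κ y * h ν y)) x
      = c * pd i (fun y => ∑ ν, ∑ κ, f ν κ y * (g κ y * h ν y)) x :=
    pd_const_mul (DifferentiableAt.fun_sum fun ν _ => ds ν) c i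
  rw [h1, pd_sum _ (fun ν _ => ds ν) i]
  congr 1
  refine Finset.sum_congr rfl fun ν _ => ?_
  rw [pd_sum _ (fun κ _ => dt ν κ) i]
  refine Finset.sum_congr rfl fun κ _ => ?_
  rw [pd_mul (hf ν κ) (dgh ν κ) i, pd_mul (hg κ) (hh ν) i]

open Finset in
lemma sum_rot {ι : Type*} [Fintype ι] {M : Type*} [AddCommMonoid M] (f : ι → ι → ι → M) :
    ∑ a, ∑ b, ∑ c, f a b c = ∑ b, ∑ c, ∑ a, f a b c := by
  rw [Finset.sum_comm]
  exact Finset.sum_congr rfl fun b _ => Finset.sum_comm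

open Finset in
lemma sum_swap13 {ι : Type*} [Fintype ι] {M : Type*} [AddCommMonoid M] (f : ι → ι → ι → M) :
    ∑ a, ∑ b, ∑ c, f a b c = ∑ c, ∑ b, ∑ a, f a b c := by
  rw [sum_rot f, Finset.sum_comm]

open Finset in
lemma alg1 {n : ℕ} (lam mu : ℝ) (hlm : lam + mu ≠ 0) (G : Fin n → Fin n → ℝ) (P C : Fin n → ℝ) :
    (lam * mu / (lam + mu)) * ∑ ν, ((lam * ∑ κ, G ν κ * P κ) * C ν
        + P ν * (mu * ∑ κ, G κ ν * C κ))
      = lam * mu * ∑ ν, ∑ κ, G ν κ * (P κ * C ν) := by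
  have hc : lam * mu / (lam + mu) * (lam + mu) = lam * mu := div_mul_cancel₀ _ hlm
  simp only [Finset.mul_sum, Finset.sum_mul, mul_add, add_mul, Finset.sum_add_distrib]
  rw [show (∑ ν : Fin n, ∑ κ : Fin n, lam * mu / (lam + mu) * (P ν * (mu * (G κ ν * C κ))))
      = ∑ κ : Fin n, ∑ ν : Fin n, lam * mu / (lam + mu) * (P ν * (mu * (G κ ν * C κ)))
      from Finset.sum_comm]
  rw [← Finset.sum_add_distrib]
  refine Finset.sum_congr rfl fun ν _ => ?_
  rw [← Finset.sum_add_distrib]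
  refine Finset.sum_congr rfl fun κ _ => ?_
  linear_combination (G ν κ * (P κ * C ν)) * hc

open Finset in
lemma alg {n : ℕ} (lam mu : ℝ) (T G A : Fin n → Fin n → ℝ) (F : Fin n → Fin n → Fin n → ℝ)
    (H P C : Fin n → ℝ)
    (key : ∀ κ ρ, ∑ ν, G ν κ * A ν ρ = ∑ ν, H ν * F ν κ ρ) :
    lam * mu * ∑ ν, ∑ κ, (T ν κ * (P κ * C ν)
        + G ν κ * ((lam * ∑ ρ, A ρ κ * P ρ) * C ν + P κ * (mu * ∑ ρ, A ν ρ * C ρ)))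
      = mu * ∑ ν, (lam * ∑ κ, (T ν κ * P κ + G ν κ * (lam * ∑ ρ, A ρ κ * P ρ))) * C ν
        + mu * ∑ ν, H ν * (lam * mu * ∑ ρ, ∑ κ, F ν κ ρ * (P κ * C ρ)) := by
  simp only [Finset.mul_sum, Finset.sum_mul, mul_add, add_mul, Finset.sum_add_distrib]
  rw [← add_assoc]
  congr 1
  · congr 1
    · exact Finset.sum_congr rfl fun ν _ => Finset.sum_congr rfl fun κ _ => by ring
    · exact Finset.sum_congr rfl fun ν _ => Finset.sum_congr rfl fun κ _ =>
        Finset.sum_congr rfl fun ρ _ => by ring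
  · rw [sum_rot fun ν κ ρ => lam * mu * (G ν κ * (P κ * (mu * (A ν ρ * C ρ)))),
        sum_swap13 fun ν ρ κ => mu * (H ν * (lam * mu * (F ν κ ρ * (P κ * C ρ))))]
    refine Finset.sum_congr rfl fun κ _ => Finset.sum_congr rfl fun ρ _ => ?_
    calc ∑ ν, lam * mu * (G ν κ * (P κ * (mu * (A ν ρ * C ρ))))
        = (∑ ν, G ν κ * A ν ρ) * (lam * mu * mu * (P κ * C ρ)) := by
          rw [Finset.sum_mul]; exact Finset.sum_congr rfl fun ν _ => by ring
      _ = (∑ ν, H ν * F ν κ ρ) * (lam * mu * mu * (P κ * C ρ)) := by rw [key]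
      _ = ∑ ν, mu * (H ν * (lam * mu * (F ν κ ρ * (P κ * C ρ)))) := by
          rw [Finset.sum_mul]; exact Finset.sum_congr rfl fun ν _ => by ring

/-- the pair `(G, Ξ)` with `G^α = ψ_λ^α` and
`Ξ = (λμ/(λ+μ)) ψ_λ^ν ∂_ν χ_μ` satisfies the linearization of the scalar
spectral problem with parameter `μ`. -/
theorem extended_flow_scalar_spectral
    {n : ℕ} (hn : 1 ≤ n)
    (K ψl : Fin n → (Fin n → ℝ) → ℝ) (χm : (Fin n → ℝ) → ℝ) (lam mu : ℝ)
    (hlm : lam + mu ≠ 0)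
    (hK : ∀ α, ContDiff ℝ (⊤ : ℕ∞) (K α))
    (hψl : ∀ α, ContDiff ℝ (⊤ : ℕ∞) (ψl α))
    (hχm : ContDiff ℝ (⊤ : ℕ∞) χm)
    (hAE : ∀ α β γ ν, ∀ x : Fin n → ℝ,
      ∑ ρ, pd α (pd ρ (K ν)) x * pd β (pd γ (K ρ)) x
        = ∑ ρ, pd α (pd β (K ρ)) x * pd ρ (pd γ (K ν)) x)
    (hspl : ∀ α β, ∀ x : Fin n → ℝ,
      pd β (ψl α) x = lam * ∑ γ, pd β (pd γ (K α)) x * ψl γ x)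
    (hsspm : ∀ α γ, ∀ x : Fin n → ℝ,
      pd α (pd γ χm) x = mu * ∑ ν, pd α (pd γ (K ν)) x * pd ν χm x) :
    ∀ α γ, ∀ x : Fin n → ℝ,
      pd α (pd γ (fun y => (lam * mu / (lam + mu)) * ∑ ν, ψl ν y * pd ν χm y)) x
        = mu * (∑ ν, pd α (pd γ (ψl ν)) x * pd ν χm x)
          + mu * (∑ ν, pd α (pd γ (K ν)) x
              * pd ν (fun y => (lam * mu / (lam + mu)) * ∑ κ, ψl κ y * pd κ χm y) x) := by
  intro α γ x
  have dA : ∀ {f : (Fin n → ℝ) → ℝ}, ContDiff ℝ (⊤ : ℕ∞) f → ∀ y : Fin n → ℝ, DifferentiableAt ℝ f y :=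
    fun hf y => (hf.differentiable (by simp)).differentiableAt
  have hχd : ∀ ν, ContDiff ℝ (⊤ : ℕ∞) (pd ν χm) := fun ν => contDiff_pd hχm ν
  have hK3 : ∀ ν δ κ, ContDiff ℝ (⊤ : ℕ∞) (pd δ (pd κ (K ν))) :=
    fun ν δ κ => contDiff_pd (contDiff_pd (hK ν) κ) δ
  -- Step 1 : the first derivative of Ξ
  have step1 : ∀ δ : Fin n,
      pd δ (fun y => (lam * mu / (lam + mu)) * ∑ ν, ψl ν y * pd ν χm y)
        = fun z => lam * mu * ∑ ν, ∑ κ, pd δ (pd κ (K ν)) z * (ψl κ z * pd ν χm z) := by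
    intro δ
    funext z
    rw [pd_csum (lam * mu / (lam + mu)) ψl (fun ν => pd ν χm)
        (fun j => dA (hψl j) z) (fun j => dA (hχd j) z) δ]
    simp only [hspl, hsspm]
    exact alg1 lam mu hlm (fun ν κ => pd δ (pd κ (K ν)) z) (fun κ => ψl κ z)
      (fun ν => pd ν χm z)
  -- second derivative of Ξ
  have L1 : pd α (pd γ (fun y => (lam * mu / (lam + mu)) * ∑ ν, ψl ν y * pd ν χm y)) x
      = pd α (fun z => lam * mu * ∑ ν, ∑ κ, pd γ (pd κ (K ν)) z * (ψl κ z * pd ν χm z)) x := by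
    rw [step1 γ]
  have L2 : pd α (fun z => lam * mu * ∑ ν, ∑ κ, pd γ (pd κ (K ν)) z * (ψl κ z * pd ν χm z)) x
      = lam * mu * ∑ ν, ∑ κ, (pd α (pd γ (pd κ (K ν))) x * (ψl κ x * pd ν χm x)
          + pd γ (pd κ (K ν)) x * (pd α (ψl κ) x * pd ν χm x
            + ψl κ x * pd α (pd ν χm) x)) :=
    pd_csum2 (lam * mu) (fun ν κ => pd γ (pd κ (K ν))) ψl (fun ν => pd ν χm)
      (fun ν κ => dA (hK3 ν γ κ) x) (fun j => dA (hψl j) x) (fun j => dA (hχd j) x) α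
  -- second derivative of ψl
  have hψ2 : ∀ ν, pd α (pd γ (ψl ν)) x
      = lam * ∑ κ, (pd α (pd γ (pd κ (K ν))) x * ψl κ x
          + pd γ (pd κ (K ν)) x * pd α (ψl κ) x) := by
    intro ν
    have e : pd γ (ψl ν) = fun z => lam * ∑ κ, pd γ (pd κ (K ν)) z * ψl κ z :=
      funext fun z => hspl ν γ z
    rw [e]
    exact pd_csum lam (fun κ => pd γ (pd κ (K ν))) ψl
      (fun κ => dA (hK3 ν γ κ) x) (fun κ => dA (hψl κ) x) α
  -- first derivative of Ξ at x, evaluated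
  have hΞν : ∀ ν : Fin n,
      pd ν (fun y => (lam * mu / (lam + mu)) * ∑ κ, ψl κ y * pd κ χm y) x
        = lam * mu * ∑ ρ, ∑ κ, pd ν (pd κ (K ρ)) x * (ψl κ x * pd ρ χm x) := by
    intro ν
    rw [step1 ν]
  -- AE in the needed form
  have key : ∀ κ ρ : Fin n,
      ∑ ν, pd γ (pd κ (K ν)) x * pd α (pd ν (K ρ)) x
        = ∑ ν, pd α (pd γ (K ν)) x * pd ν (pd κ (K ρ)) x := by
    intro κ ρ
    rw [← hAE α γ κ ρ x]
    exact Finset.sum_congr rfl fun σ _ => mul_comm _ _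
  rw [L1, L2]
  simp only [hψ2, hΞν, hspl, hsspm]
  exact alg lam mu (fun ν κ => pd α (pd γ (pd κ (K ν))) x) (fun ν κ => pd γ (pd κ (K ν)) x)
    (fun ρ κ => pd α (pd ρ (K κ)) x) (fun ν κ ρ => pd ν (pd κ (K ρ)) x)
    (fun ν => pd α (pd γ (K ν)) x) (fun κ => ψl κ x) (fun ν => pd ν χm x) key
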